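/- arXiv:1801.09480 — 2 statements merged into one kernel-verified Lean document; each statement's English description precedes it below -/
import Mathlib

section
/- Let n ≥ 1 and let B ⊆ (ZMod n)^n be a set of exactly n² vectors with the plane code property. If v, w, u ∈ B are three distinct vectors such that v - w has no coordinate equal to 0 and w - u has no coordinate equal to 0, then v - u has no coordinate equal to 0. -/
/-- The number of coordinates where two vectors in `(ZMod n)^n` agree,
i.e. the number of coordinates of `b - b'` equal to `0`. -/
def agreeCount {n : ℕ} (b b' : Fin n → ZMod n) : ℕ :=
  (Finset.univ.filter fun i => b i - b' i = 0).card

/-- `B` has the plane code property: any two distinct elements of `B`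
agree in at most one coordinate. -/
def PlaneCode {n : ℕ} (B : Finset (Fin n → ZMod n)) : Prop :=
  ∀ b ∈ B, ∀ b' ∈ B, b ≠ b' → agreeCount b b' ≤ 1

/-!
If `v` and `u` agreed in coordinate `i`, look at the line `L` of codewords whose `i`-th coordinate
is `v i`. Since `|B| = n²` and any two coordinates determine a codeword, every pair of values in two
coordinates is attained exactly once; so `L` has at most `n` elements, and for each `j ≠ i` some
codeword of `L` agrees with `w` at `j`. These `n - 1` codewords are distinct (a codeword agreeing
with `w` twice is `w`, which is not in `L`) and differ from `v` and `u`, which never agree with `w`.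
Hence `|L| ≥ n + 1`, a contradiction.
-/

open Finset

theorem agreeCount_eq_zero_iff {n : ℕ} {b b' : Fin n → ZMod n} :
    agreeCount b b' = 0 ↔ ∀ i, b i ≠ b' i := by
  simp [agreeCount, filter_eq_empty_iff, sub_eq_zero]

theorem two_le_of_apply_ne {n : ℕ} {b b' : Fin n → ZMod n} {i : Fin n} (h : b i ≠ b' i) :
    2 ≤ n := by
  obtain _ | _ | n := n
  · exact i.elim0
  · exact absurd (Subsingleton.elim (α := ZMod 1) _ _) h
  · omega

namespace PlaneCode

variable {n : ℕ} {B : Finset (Fin n → ZMod n)}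

theorem eq_of_apply_eq_of_apply_eq (hB : PlaneCode B) {b b' : Fin n → ZMod n} (hb : b ∈ B)
    (hb' : b' ∈ B) {i j : Fin n} (hij : i ≠ j) (hi : b i = b' i) (hj : b j = b' j) : b = b' := by
  by_contra hne
  have : 1 < agreeCount b b' :=
    one_lt_card.2 ⟨i, by simp [hi], j, by simp [hj], hij⟩
  exact absurd (hB b hb b' hb' hne) this.not_ge

theorem injOn_apply_pair (hB : PlaneCode B) {i j : Fin n} (hij : i ≠ j) :
    Set.InjOn (fun b : Fin n → ZMod n => (b i, b j)) B := fun _ hb _ hb' h =>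
  hB.eq_of_apply_eq_of_apply_eq hb hb' hij (Prod.ext_iff.1 h).1 (Prod.ext_iff.1 h).2

theorem exists_mem_apply_eq (hB : PlaneCode B) (hcard : B.card = n ^ 2) {i j : Fin n}
    (hij : i ≠ j) (x y : ZMod n) : ∃ b ∈ B, b i = x ∧ b j = y := by
  have : NeZero n := NeZero.of_pos i.pos
  have himage : B.image (fun b => (b i, b j)) = univ := by
    apply eq_univ_of_card
    simp [card_image_of_injOn (hB.injOn_apply_pair hij), hcard, ZMod.card, sq]
  obtain ⟨b, hb, hbxy⟩ := mem_image.1 (himage ▸ mem_univ (x, y))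
  exact ⟨b, hb, Prod.ext_iff.1 hbxy⟩

theorem card_filter_apply_eq_le (hB : PlaneCode B) {i j : Fin n} (hij : i ≠ j) (a : ZMod n) :
    (B.filter (· i = a)).card ≤ n := by
  have : NeZero n := NeZero.of_pos i.pos
  have hinj : Set.InjOn (· j) (B.filter (· i = a) : Set (Fin n → ZMod n)) := by
    intro b hb b' hb' h
    rw [mem_coe, mem_filter] at hb hb'
    exact hB.eq_of_apply_eq_of_apply_eq hb.1 hb'.1 hij (hb.2.trans hb'.2.symm) h
  calc (B.filter (· i = a)).card = ((B.filter (· i = a)).image (· j)).card :=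
        (card_image_of_injOn hinj).symm
    _ ≤ Fintype.card (ZMod n) := card_le_univ _
    _ = n := ZMod.card n

theorem sub_one_le_card_filter_exists_apply_eq (hB : PlaneCode B) (hcard : B.card = n ^ 2)
    {w : Fin n → ZMod n} (hw : w ∈ B) {i : Fin n} {a : ZMod n} (ha : w i ≠ a) :
    n - 1 ≤ ((B.filter (· i = a)).filter fun b => ∃ j, b j = w j).card := by
  have hex : ∀ j ∈ univ.erase i, ∃ b ∈ B, b i = a ∧ b j = w j := fun j hj =>
    hB.exists_mem_apply_eq hcard (ne_of_mem_erase hj).symm a (w j)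
  choose! f hfB hfi hfj using hex
  have hmaps : Set.MapsTo f (univ.erase i : Finset (Fin n))
      ((B.filter (· i = a)).filter fun b => ∃ j, b j = w j) := fun j hj =>
    mem_filter.2 ⟨mem_filter.2 ⟨hfB j hj, hfi j hj⟩, j, hfj j hj⟩
  -- a codeword agreeing with `w` at two coordinates would be `w`, but `w i ≠ a`
  have hinj : Set.InjOn f (univ.erase i : Finset (Fin n)) := by
    intro j hj j' hj' h
    by_contra hne
    have hfw := hB.eq_of_apply_eq_of_apply_eq (hfB j hj) hw hne (hfj j hj) (h ▸ hfj j' hj')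
    exact ha (hfw ▸ hfi j hj)
  calc n - 1 = (univ.erase i).card := by simp
    _ ≤ _ := card_le_card_of_injOn f hmaps hinj

end PlaneCode

theorem plane_code_parallel_trans_general (n : ℕ)
    (B : Finset (Fin n → ZMod n)) (hcard : B.card = n ^ 2) (hB : PlaneCode B)
    (v w u : Fin n → ZMod n) (hv : v ∈ B) (hw : w ∈ B) (hu : u ∈ B)
    (hvu : v ≠ u)
    (h1 : agreeCount v w = 0) (h2 : agreeCount w u = 0) :
    agreeCount v u = 0 := by
  rw [agreeCount_eq_zero_iff] at h1 h2 ⊢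
  by_contra! ⟨i, hi⟩
  have : Nontrivial (Fin n) := Fin.nontrivial_iff_two_le.2 (two_le_of_apply_ne (h1 i))
  obtain ⟨j, hij⟩ := exists_ne i
  set L := B.filter (· i = v i)
  have hL : L.card ≤ n := hB.card_filter_apply_eq_le hij.symm (v i)
  have hmeet : n - 1 ≤ (L.filter fun b => ∃ j, b j = w j).card :=
    hB.sub_one_le_card_filter_exists_apply_eq hcard hw (h1 i).symm
  have hmiss : 1 < (L.filter fun b => ¬∃ j, b j = w j).card :=
    one_lt_card.2 ⟨v, by simp [L, hv, h1], u, by simp [L, hu, hi, fun j => (h2 j).symm], hvu⟩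
  have hsplit := card_filter_add_card_filter_not (s := L) (fun b => ∃ j, b j = w j)
  omega

theorem plane_code_parallel_trans (n : ℕ) (hn : 1 ≤ n)
    (B : Finset (Fin n → ZMod n)) (hcard : B.card = n ^ 2) (hB : PlaneCode B)
    (v w u : Fin n → ZMod n) (hv : v ∈ B) (hw : w ∈ B) (hu : u ∈ B)
    (hvw : v ≠ w) (hwu : w ≠ u) (hvu : v ≠ u)
    (h1 : agreeCount v w = 0) (h2 : agreeCount w u = 0) :
    agreeCount v u = 0 :=
  plane_code_parallel_trans_general n B hcard hB v w u hv hw hu hvu h1 h2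
end

section
/- Let n ≥ 2. If there exists a set B ⊆ (ZMod n)^n of exactly n² vectors with the plane code property, then there exists such a set B' (of exactly n² vectors, with the plane code property) that contains all n constant vectors (m, m, ..., m) for m ∈ ZMod n, and contains n - 1 vectors v₁, ..., v_{n-1} each having first coordinate 0 and all other coordinates nonzero, such that for every index i ∈ {2, ..., n} the values v₁(i), ..., v_{n-1}(i) are pairwise distinct (and nonzero), and for every k ∈ {1, ..., n-1} the values v_k(2), ..., v_k(n) are pairwise distinct (and nonzero); that is, the array (v_k(i)) for 1 ≤ k ≤ n-1 and 2 ≤ i ≤ n forms a Latin square of order n - 1 on the nonzero symbols of ZMod n. -/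
/-!
Any two coordinates of such a code determine a word: `b ↦ (b i, b j)` is injective on `B`, hence
a bijection onto `(ZMod n)²`. Counting fibres with this, a word `b` together with the `n - 1`
words disagreeing with `b` everywhere takes every symbol exactly once in each coordinate.
Relabelling the symbols coordinatewise turns this transversal into the constant words and keeps
the plane code property. The words other than `0` vanishing at `i₀` then form the Latin square:
a repeated or zero entry would make two of them, or one of them and a constant word, agree twice.
-/

open Finset

variable {n : ℕ}

lemma agreeCount_eq_card_filter_eq (b c : Fin n → ZMod n) :
    agreeCount b c = #{i | b i = c i} := by
  simp only [agreeCount, sub_eq_zero]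

def relabel (f : Fin n → ZMod n → ZMod n) (b : Fin n → ZMod n) : Fin n → ZMod n :=
  fun i => f i (b i)

lemma agreeCount_relabel {f : Fin n → ZMod n → ZMod n} (hf : ∀ i, (f i).Injective)
    (b c : Fin n → ZMod n) : agreeCount (relabel f b) (relabel f c) = agreeCount b c := by
  simp only [agreeCount_eq_card_filter_eq, relabel, (hf _).eq_iff]

lemma relabel_injective {f : Fin n → ZMod n → ZMod n} (hf : ∀ i, (f i).Injective) :
    (relabel f).Injective :=
  fun _ _ h => funext fun i => hf i (congrFun h i)

namespace PlaneCode

variable {B : Finset (Fin n → ZMod n)}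

lemma image_relabel (hB : PlaneCode B) {f : Fin n → ZMod n → ZMod n}
    (hf : ∀ i, (f i).Injective) : PlaneCode (B.image (relabel f)) := by
  simp only [PlaneCode, mem_image]
  rintro _ ⟨b, hb, rfl⟩ _ ⟨c, hc, rfl⟩ hne
  rw [agreeCount_relabel hf]
  exact hB b hb c hc fun h => hne (h ▸ rfl)

lemma eq_of_eq_of_eq (hB : PlaneCode B) {b c : Fin n → ZMod n} (hb : b ∈ B) (hc : c ∈ B)
    {i j : Fin n} (hij : i ≠ j) (hi : b i = c i) (hj : b j = c j) : b = c := by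
  by_contra hne
  have hle := hB b hb c hc hne
  rw [agreeCount_eq_card_filter_eq] at hle
  exact hle.not_gt (one_lt_card.mpr ⟨i, by simpa using hi, j, by simpa using hj, hij⟩)

-- A disjoint union, since a word of `S` agrees with `b` at most once.
lemma card_filter_exists_eq (hB : PlaneCode B) {b : Fin n → ZMod n} (hb : b ∈ B)
    {S : Finset (Fin n → ZMod n)} (hS : S ⊆ B) (hbS : b ∉ S) :
    #{c ∈ S | ∃ j, c j = b j} = ∑ j, #{c ∈ S | c j = b j} := by
  rw [← card_biUnion]
  · congr 1
    ext c
    simp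
  · intro j _ k _ hjk
    refine disjoint_left.mpr fun c hcj hck => ?_
    obtain ⟨hc, hcj⟩ := mem_filter.mp hcj
    have hcb := hB.eq_of_eq_of_eq (hS hc) hb hjk hcj (mem_filter.mp hck).2
    exact hbS (hcb ▸ hc)

variable [NeZero n]

lemma exists_mem_eq_eq (hB : PlaneCode B) (hcard : #B = n ^ 2) {i j : Fin n} (hij : i ≠ j)
    (s t : ZMod n) : ∃ b ∈ B, b i = s ∧ b j = t := by
  have hinj : Set.InjOn (fun b : Fin n → ZMod n => (b i, b j)) B :=
    fun b hb c hc h => hB.eq_of_eq_of_eq hb hc hij (Prod.ext_iff.mp h).1 (Prod.ext_iff.mp h).2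
  have himage : B.image (fun b => (b i, b j)) = univ := by
    apply eq_univ_of_card
    rw [card_image_of_injOn hinj, hcard, Fintype.card_prod, ZMod.card, sq]
  have hst := mem_univ (s, t)
  rw [← himage, mem_image] at hst
  simpa using hst

lemma card_filter_eq_eq (hB : PlaneCode B) (hcard : #B = n ^ 2) {i j : Fin n} (hij : i ≠ j)
    (s t : ZMod n) : #{b ∈ B | b i = s ∧ b j = t} = 1 := by
  obtain ⟨b, hb, hbi, hbj⟩ := hB.exists_mem_eq_eq hcard hij s t
  refine card_eq_one.mpr ⟨b, ext fun c => ⟨fun hc => ?_, fun hc => ?_⟩⟩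
  · obtain ⟨hc, hci, hcj⟩ := mem_filter.mp hc
    exact mem_singleton.mpr (hB.eq_of_eq_of_eq hc hb hij (hci.trans hbi.symm)
      (hcj.trans hbj.symm))
  · rw [mem_singleton.mp hc]
    exact mem_filter.mpr ⟨hb, hbi, hbj⟩

lemma card_filter_eq (hn : 2 ≤ n) (hB : PlaneCode B) (hcard : #B = n ^ 2) (i : Fin n)
    (s : ZMod n) : #{b ∈ B | b i = s} = n := by
  have : Nontrivial (Fin n) := Fin.nontrivial_iff_two_le.mpr hn
  obtain ⟨j, hji⟩ := exists_ne i
  rw [card_eq_sum_card_fiberwise (f := fun b => b j) (t := univ)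
    fun _ _ => mem_coe.mpr (mem_univ _)]
  simp only [filter_filter, hB.card_filter_eq_eq hcard hji.symm, sum_const, card_univ,
    ZMod.card, smul_eq_mul, mul_one]

lemma card_filter_eq_forall_ne (hn : 2 ≤ n) (hB : PlaneCode B) (hcard : #B = n ^ 2)
    {b : Fin n → ZMod n} (hb : b ∈ B) {i : Fin n} {s : ZMod n} (hs : s ≠ b i) :
    #{c ∈ B | c i = s ∧ ∀ j, c j ≠ b j} = 1 := by
  -- Of the `n` words with `c i = s`, exactly one agrees with `b` at each `j ≠ i`, none at `i`.
  set ℓ : Finset (Fin n → ZMod n) := {c ∈ B | c i = s}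
  have hbℓ : b ∉ ℓ := fun h => hs (mem_filter.mp h).2.symm
  have hagree : #{c ∈ ℓ | ∃ j, c j = b j} = n - 1 := by
    rw [hB.card_filter_exists_eq hb (filter_subset _ B) hbℓ]
    have hj : ∀ j, #{c ∈ ℓ | c j = b j} = if j = i then 0 else 1 := by
      intro j
      split_ifs with hji
      · subst hji
        exact card_eq_zero.mpr (filter_eq_empty_iff.mpr fun c hc hcb =>
          hs ((mem_filter.mp hc).2.symm.trans hcb))
      · rw [filter_filter]
        exact hB.card_filter_eq_eq hcard (Ne.symm hji) s (b j)
    rw [sum_congr rfl fun j _ => hj j]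
    simp [sum_ite, filter_ne', card_univ]
  have hsplit := card_filter_add_card_filter_not (s := ℓ) (p := fun c => ∃ j, c j = b j)
  rw [hagree, hB.card_filter_eq hn hcard] at hsplit
  have hℓ : #{c ∈ ℓ | ¬∃ j, c j = b j} = 1 := by omega
  simpa [ℓ, filter_filter] using hℓ

lemma exists_transversal (hn : 2 ≤ n) (hB : PlaneCode B) (hcard : #B = n ^ 2) :
    ∃ P ⊆ B, ∀ i s, #{p ∈ P | p i = s} = 1 := by
  obtain ⟨b, hb⟩ : B.Nonempty := by
    rw [← card_pos, hcard]
    exact pow_pos (by omega) 2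
  refine ⟨insert b {c ∈ B | ∀ j, c j ≠ b j}, insert_subset hb (filter_subset _ B), ?_⟩
  intro i s
  rw [filter_insert, filter_filter, filter_congr fun _ _ => and_comm]
  split_ifs with hs
  · subst hs
    rw [filter_false_of_mem fun c _ hc => hc.2 i hc.1]
    rfl
  · exact hB.card_filter_eq_forall_ne hn hcard hb (Ne.symm hs)

lemma exists_relabel_const_mem (hn : 2 ≤ n) (hB : PlaneCode B) (hcard : #B = n ^ 2) :
    ∃ B' : Finset (Fin n → ZMod n), #B' = n ^ 2 ∧ PlaneCode B' ∧
      ∀ m : ZMod n, (fun _ => m) ∈ B' := by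
  obtain ⟨P, hPB, hP⟩ := hB.exists_transversal hn hcard
  choose q hq using fun i s => card_eq_one.mp (hP i s)
  have hq_mem : ∀ i s, q i s ∈ P ∧ q i s i = s := fun i s =>
    mem_filter.mp ((hq i s).symm ▸ mem_singleton_self (q i s))
  have hq_unique : ∀ p ∈ P, ∀ i, p = q i (p i) := fun p hp i =>
    mem_singleton.mp (hq i (p i) ▸ mem_filter.mpr ⟨hp, rfl⟩)
  set f : Fin n → ZMod n → ZMod n := fun i s => q i s 0
  have hf : ∀ i, (f i).Injective := by
    intro i s t hst
    have hqst : q i s = q i t := by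
      rw [hq_unique _ (hq_mem i s).1 0, hq_unique _ (hq_mem i t).1 0]
      exact congrArg (q 0) hst
    rw [← (hq_mem i s).2, ← (hq_mem i t).2, hqst]
  refine ⟨B.image (relabel f), ?_, hB.image_relabel hf, fun m => ?_⟩
  · rw [card_image_of_injective _ (relabel_injective hf), hcard]
  · refine mem_image.mpr ⟨q 0 m, hPB (hq_mem 0 m).1, funext fun i => ?_⟩
    change q i (q 0 m i) 0 = m
    rw [← hq_unique _ (hq_mem 0 m).1 i, (hq_mem 0 m).2]

lemma exists_latin_rows (hn : 2 ≤ n) (hB : PlaneCode B) (hcard : #B = n ^ 2)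
    (hconst : ∀ m : ZMod n, (fun _ => m) ∈ B) (i₀ : Fin n) :
    ∃ v : Fin (n - 1) → (Fin n → ZMod n),
      (∀ k, v k ∈ B) ∧
      (∀ k, v k i₀ = 0) ∧
      (∀ k, ∀ i : Fin n, i ≠ i₀ → v k i ≠ 0) ∧
      (∀ i : Fin n, i ≠ i₀ → ∀ k l, k ≠ l → v k i ≠ v l i) ∧
      (∀ k, ∀ i j : Fin n, i ≠ i₀ → j ≠ i₀ → i ≠ j → v k i ≠ v k j) := by
  set S : Finset (Fin n → ZMod n) := {b ∈ B | b i₀ = 0}.erase fun _ => 0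
  have hzero : (fun _ => 0) ∈ ({b ∈ B | b i₀ = 0} : Finset _) :=
    mem_filter.mpr ⟨hconst 0, rfl⟩
  have hS : #S = n - 1 := by
    rw [card_erase_of_mem hzero, hB.card_filter_eq hn hcard]
  set e := (S.equivFin.trans (finCongr hS)).symm
  have hv : ∀ k, (e k).1 ≠ (fun _ => 0) ∧ (e k).1 ∈ B ∧ (e k).1 i₀ = 0 :=
    fun k => by simpa only [S, mem_erase, mem_filter] using (e k).2
  have hnz : ∀ k, ∀ i : Fin n, i ≠ i₀ → (e k).1 i ≠ 0 := fun k i hi hki =>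
    (hv k).1 (hB.eq_of_eq_of_eq (hv k).2.1 (hconst 0) hi hki (hv k).2.2)
  refine ⟨fun k => e k, fun k => (hv k).2.1, fun k => (hv k).2.2, hnz, ?_, ?_⟩
  · intro i hi k l hkl hkli
    refine hkl (e.injective (Subtype.ext ?_))
    exact hB.eq_of_eq_of_eq (hv k).2.1 (hv l).2.1 hi hkli
      ((hv k).2.2.trans (hv l).2.2.symm)
  · intro k i j hi _ hij hkij
    have hconst_eq := hB.eq_of_eq_of_eq (hv k).2.1 (hconst ((e k).1 i)) hij rfl hkij.symm
    exact hnz k i hi ((congrFun hconst_eq i₀).symm.trans (hv k).2.2)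

end PlaneCode

theorem plane_code_normal_form_general (n : ℕ) (hn : 2 ≤ n)
    (i₀ : Fin n)
    (B : Finset (Fin n → ZMod n)) (hcard : B.card = n ^ 2) (hB : PlaneCode B) :
    ∃ B' : Finset (Fin n → ZMod n), B'.card = n ^ 2 ∧ PlaneCode B' ∧
      (∀ m : ZMod n, (fun _ => m) ∈ B') ∧
      ∃ v : Fin (n - 1) → (Fin n → ZMod n),
        (∀ k, v k ∈ B') ∧
        (∀ k, v k i₀ = 0) ∧
        (∀ k, ∀ i : Fin n, i ≠ i₀ → v k i ≠ 0) ∧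
        (∀ i : Fin n, i ≠ i₀ → ∀ k l, k ≠ l → v k i ≠ v l i) ∧
        (∀ k, ∀ i j : Fin n, i ≠ i₀ → j ≠ i₀ → i ≠ j → v k i ≠ v k j) := by
  have : NeZero n := ⟨by omega⟩
  obtain ⟨B', hcard', hB', hconst⟩ := hB.exists_relabel_const_mem hn hcard
  exact ⟨B', hcard', hB', hconst, hB'.exists_latin_rows hn hcard' hconst i₀⟩

theorem plane_code_normal_form (n : ℕ) (hn : 2 ≤ n)
    (i₀ : Fin n) (hi₀ : (i₀ : ℕ) = 0)
    (B : Finset (Fin n → ZMod n)) (hcard : B.card = n ^ 2) (hB : PlaneCode B) :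
    ∃ B' : Finset (Fin n → ZMod n), B'.card = n ^ 2 ∧ PlaneCode B' ∧
      (∀ m : ZMod n, (fun _ => m) ∈ B') ∧
      ∃ v : Fin (n - 1) → (Fin n → ZMod n),
        (∀ k, v k ∈ B') ∧
        (∀ k, v k i₀ = 0) ∧
        (∀ k, ∀ i : Fin n, i ≠ i₀ → v k i ≠ 0) ∧
        (∀ i : Fin n, i ≠ i₀ → ∀ k l, k ≠ l → v k i ≠ v l i) ∧
        (∀ k, ∀ i j : Fin n, i ≠ i₀ → j ≠ i₀ → i ≠ j → v k i ≠ v k j) :=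
  plane_code_normal_form_general n hn i₀ B hcard hB
end
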